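/- arXiv:2601.18902 — 2 statements merged into one kernel-verified Lean document; each statement's English description precedes it below -/
import Mathlib

section
/- Suppose (μ_p, σ_p²) ≠ (μ_q, σ_q²). Then the function g(τ) = (1/2)[log(σ_q²/σ_r²(τ)) + (σ_r²(τ) + (1−τ)²(μ_p−μ_q)²)/σ_q² − 1], with σ_r²(τ) = (1−τ)σ_p² + τσ_q² + τ²(1−τ)(μ_p−μ_q)², is strictly decreasing on (0,1); hence for every θ ∈ (0, g(0)) there is a unique τ* ∈ (0,1) with g(τ*) = θ. -/
/-!
With `a = σ_p²`, `b = σ_q²`, `m = (μ_p - μ_q)²` and `c = a - b + τ² m` one has `σ_r² - b = (1 - τ) c`,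
and differentiating gives `g'(τ) = -(1 - τ) N(τ) / (2 b σ_r²(τ))` where
`N = c² - 2τ(1 - τ) m c + 2 m σ_r² = (c - τ(1 - τ) m)² + m (2 σ_r² - τ²(1 - τ)² m)`.
The last bracket equals `2((1 - τ) a + τ b) + τ²(1 - τ)(1 + τ) m > 0`, so `N > 0` unless `m = 0` and
`a = b`. Hence `g` is strictly decreasing on `[0, 1]`; since `g(1) = 0`, the intermediate value
theorem gives a solution of `g τ = θ` and monotonicity makes it unique.
-/

open Set

noncomputable def mixVar (a b m τ : ℝ) : ℝ := (1 - τ) * a + τ * b + τ ^ 2 * (1 - τ) * m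

noncomputable def constraintFun (a b m τ : ℝ) : ℝ :=
  (1 / 2) * (Real.log (b / mixVar a b m τ) + (mixVar a b m τ + (1 - τ) ^ 2 * m) / b - 1)

section

variable {a b m : ℝ}

lemma one_sub_mul_add_mul_pos (ha : 0 < a) (hb : 0 < b) {τ : ℝ} (hτ : τ ∈ Icc 0 1) :
    0 < (1 - τ) * a + τ * b := by
  obtain ⟨h0, h1⟩ := hτ
  nlinarith [mul_le_mul_of_nonneg_left (min_le_right a b) h0,
    mul_le_mul_of_nonneg_left (min_le_left a b) (sub_nonneg.2 h1), lt_min ha hb]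

lemma mixVar_pos (ha : 0 < a) (hb : 0 < b) (hm : 0 ≤ m) {τ : ℝ} (hτ : τ ∈ Icc 0 1) :
    0 < mixVar a b m τ := by
  have : 0 ≤ 1 - τ := sub_nonneg.2 hτ.2
  have : 0 ≤ τ ^ 2 * (1 - τ) * m := by positivity
  unfold mixVar
  linarith [one_sub_mul_add_mul_pos ha hb hτ]

lemma constraintFun_one (hb : b ≠ 0) : constraintFun a b m 1 = 0 := by
  simp [constraintFun, mixVar, hb]

lemma continuousOn_constraintFun (ha : 0 < a) (hb : 0 < b) (hm : 0 ≤ m) :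
    ContinuousOn (constraintFun a b m) (Icc 0 1) := by
  have hv : ∀ τ ∈ Icc (0 : ℝ) 1, mixVar a b m τ ≠ 0 := fun τ hτ ↦ (mixVar_pos ha hb hm hτ).ne'
  have : ContinuousOn (fun τ ↦ b / mixVar a b m τ) (Icc 0 1) :=
    continuousOn_const.div (by unfold mixVar; fun_prop) hv
  unfold constraintFun
  refine continuousOn_const.mul (((this.log fun τ hτ ↦ div_ne_zero hb.ne' (hv τ hτ)).add ?_).sub
    continuousOn_const)
  unfold mixVar
  fun_prop

lemma hasDerivAt_mixVar (τ : ℝ) :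
    HasDerivAt (mixVar a b m) (b - a + (2 * τ - 3 * τ ^ 2) * m) τ := by
  have h : HasDerivAt (fun τ : ℝ ↦ (1 - τ) * a + τ * b + (τ ^ 2 - τ ^ 3) * m)
      ((-1) * a + 1 * b + (2 * τ - 3 * τ ^ 2) * m) τ := by
    refine ((((hasDerivAt_id τ).const_sub 1).mul_const a).add
      ((hasDerivAt_id τ).mul_const b)).add (((hasDerivAt_pow 2 τ).sub
      (hasDerivAt_pow 3 τ)).mul_const m) |>.congr_deriv ?_
    push_cast
    ring
  convert h using 1
  · ext τ; unfold mixVar; ring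
  · ring

noncomputable def derivNum (a b m τ : ℝ) : ℝ :=
  (a - b - τ * (1 - 2 * τ) * m) ^ 2 + m * (2 * mixVar a b m τ - τ ^ 2 * (1 - τ) ^ 2 * m)

lemma hasDerivAt_constraintFun (hb : b ≠ 0) {τ : ℝ} (hv : mixVar a b m τ ≠ 0) :
    HasDerivAt (constraintFun a b m)
      (-(1 - τ) * derivNum a b m τ / (2 * b * mixVar a b m τ)) τ := by
  have hlog := ((hasDerivAt_const τ b).div (hasDerivAt_mixVar τ) hv).log (div_ne_zero hb hv)
  have hsq : HasDerivAt (fun τ : ℝ ↦ (1 - τ) ^ 2 * m) (-(2 * (1 - τ)) * m) τ :=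
    ((((hasDerivAt_id' τ).const_sub 1).pow 2).mul_const m).congr_deriv (by norm_num)
  refine (((hlog.add ((hasDerivAt_mixVar τ).add hsq |>.div_const b)).sub_const 1).const_mul
    (1 / 2 : ℝ)).congr_deriv ?_
  simp only [Pi.div_apply, derivNum]
  unfold mixVar at hv ⊢
  field_simp
  ring

lemma derivNum_pos (ha : 0 < a) (hb : 0 < b) (hm : 0 ≤ m) (hne : m ≠ 0 ∨ a ≠ b) {τ : ℝ}
    (hτ : τ ∈ Icc 0 1) : 0 < derivNum a b m τ := by
  rcases hm.lt_or_eq with hm | rfl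
  · have hweight : 0 < 2 * mixVar a b m τ - τ ^ 2 * (1 - τ) ^ 2 * m := by
      have h1 : 0 ≤ 1 - τ := sub_nonneg.2 hτ.2
      have h2 : 0 ≤ 1 + τ := by linarith [hτ.1]
      have h3 : 0 ≤ τ ^ 2 * (1 - τ) * (1 + τ) * m := by positivity
      calc 0 < 2 * ((1 - τ) * a + τ * b) + τ ^ 2 * (1 - τ) * (1 + τ) * m := by
            linarith [one_sub_mul_add_mul_pos ha hb hτ]
        _ = 2 * mixVar a b m τ - τ ^ 2 * (1 - τ) ^ 2 * m := by unfold mixVar; ring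
    unfold derivNum
    positivity
  · have : a - b ≠ 0 := sub_ne_zero.mpr (hne.resolve_left (· rfl))
    simp only [derivNum, mul_zero, sub_zero, zero_mul]
    positivity

end

lemma existsUnique_mem_Ioo_eq_of_strictAntiOn {f : ℝ → ℝ} {a b : ℝ} (hab : a ≤ b)
    (hf : ContinuousOn f (Icc a b)) (hanti : StrictAntiOn f (Icc a b)) :
    ∀ θ ∈ Ioo (f b) (f a), ∃! x, x ∈ Ioo a b ∧ f x = θ := by
  intro θ hθ
  obtain ⟨x, hx, hfx⟩ := intermediate_value_Ioo' hab hf hθ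
  exact ⟨x, ⟨hx, hfx⟩, fun y hy ↦ hanti.injOn (Ioo_subset_Icc_self hy.1) (Ioo_subset_Icc_self hx)
    (hy.2.trans hfx.symm)⟩

lemma strictAntiOn_constraintFun (ha : 0 < a) (hb : 0 < b) (hm : 0 ≤ m) (hne : m ≠ 0 ∨ a ≠ b) :
    StrictAntiOn (constraintFun a b m) (Icc 0 1) := by
  refine strictAntiOn_of_deriv_neg (convex_Icc 0 1) (continuousOn_constraintFun ha hb hm)
    fun τ hτ ↦ ?_
  rw [interior_Icc] at hτ
  have hτ' := Ioo_subset_Icc_self hτ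
  have hv := mixVar_pos ha hb hm hτ'
  rw [(hasDerivAt_constraintFun hb.ne' hv.ne').deriv, neg_mul, neg_div, neg_lt_zero]
  have : 0 < 1 - τ := sub_pos.2 hτ.2
  have := derivNum_pos ha hb hm hne hτ'
  positivity

theorem constraint_function_strictAnti_and_unique_solution
    (μp μq σp σq : ℝ) (hσp : 0 < σp) (hσq : 0 < σq)
    (hne : (μp, σp ^ 2) ≠ (μq, σq ^ 2)) :
    let σr2 : ℝ → ℝ := fun τ =>
      (1 - τ) * σp ^ 2 + τ * σq ^ 2 + τ ^ 2 * (1 - τ) * (μp - μq) ^ 2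
    let g : ℝ → ℝ := fun τ =>
      (1 / 2) * (Real.log (σq ^ 2 / σr2 τ)
        + (σr2 τ + (1 - τ) ^ 2 * (μp - μq) ^ 2) / σq ^ 2 - 1)
    StrictAntiOn g (Set.Ioo 0 1) ∧
    ∀ θ ∈ Set.Ioo (0 : ℝ) (g 0), ∃! τ, τ ∈ Set.Ioo (0 : ℝ) 1 ∧ g τ = θ := by
  intro σr2 g
  have hnondeg : (μp - μq) ^ 2 ≠ 0 ∨ σp ^ 2 ≠ σq ^ 2 := by
    rcases eq_or_ne μp μq with rfl | h
    · exact .inr fun h ↦ hne (by rw [h])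
    · exact .inl (pow_ne_zero 2 (sub_ne_zero.2 h))
  have ha : 0 < σp ^ 2 := by positivity
  have hb : 0 < σq ^ 2 := by positivity
  have hm : 0 ≤ (μp - μq) ^ 2 := sq_nonneg _
  have hanti : StrictAntiOn g (Icc 0 1) := strictAntiOn_constraintFun ha hb hm hnondeg
  refine ⟨hanti.mono Ioo_subset_Icc_self, fun θ hθ ↦ ?_⟩
  have hg1 : g 1 = 0 := constraintFun_one hb.ne'
  exact existsUnique_mem_Ioo_eq_of_strictAntiOn zero_le_one (continuousOn_constraintFun ha hb hm)
    hanti θ (hg1 ▸ hθ)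
end

section
/- Fix τ ∈ (0,1), Δ = μ_p − μ_q, σ_r² = (1−τ)σ_p² + τσ_q² + τ²(1−τ)Δ², and λ = (τσ_q²)/((1−τ)σ_r²). Then the variance stationarity condition (1/σ_r²) − (σ_p² + τ²Δ²)/σ_r⁴ + λ·(−1/σ_r² + 1/σ_q²) = 0 holds. -/
/-! Since σ_r² = (1 - τ)(σ_p² + τ²Δ²) + τσ_q², multiplying the stationarity equation by
(1 - τ)σ_r⁴ turns it into (1 - τ)(σ_r² - σ_p² - τ²Δ²) + τ(σ_r² - σ_q²) = 0. -/

theorem variance_stationarity_of_eq_weighted_mean {K : Type*} [Field K] {a b s τ : K}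
    (hs : s = (1 - τ) * a + τ * b) (hs0 : s ≠ 0) (hτ : 1 - τ ≠ 0) (hb : b ≠ 0) :
    1 / s - a / s ^ 2 + τ * b / ((1 - τ) * s) * (-(1 / s) + 1 / b) = 0 := by
  field_simp
  rw [hs]
  ring

theorem kkt_variance_stationarity_general
    (μp μq σp σq τ : ℝ) (hσq : 0 < σq)
    (hτ : τ ∈ Set.Ioo (0 : ℝ) 1) :
    let Δ : ℝ := μp - μq
    let σr2 : ℝ := (1 - τ) * σp ^ 2 + τ * σq ^ 2 + τ ^ 2 * (1 - τ) * Δ ^ 2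
    let lam : ℝ := (τ * σq ^ 2) / ((1 - τ) * σr2)
    1 / σr2 - (σp ^ 2 + τ ^ 2 * Δ ^ 2) / σr2 ^ 2 + lam * (-(1 / σr2) + 1 / σq ^ 2) = 0 := by
  intro Δ σr2 lam
  obtain ⟨hτ0, hτ1⟩ := hτ
  have hτ1c : 0 < 1 - τ := sub_pos.2 hτ1
  have hσr2 : 0 < σr2 := by positivity
  exact variance_stationarity_of_eq_weighted_mean (by ring) hσr2.ne' hτ1c.ne' (by positivity)

theorem kkt_variance_stationarity
    (μp μq σp σq τ : ℝ) (hσp : 0 < σp) (hσq : 0 < σq)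
    (hτ : τ ∈ Set.Ioo (0 : ℝ) 1) :
    let Δ : ℝ := μp - μq
    let σr2 : ℝ := (1 - τ) * σp ^ 2 + τ * σq ^ 2 + τ ^ 2 * (1 - τ) * Δ ^ 2
    let lam : ℝ := (τ * σq ^ 2) / ((1 - τ) * σr2)
    1 / σr2 - (σp ^ 2 + τ ^ 2 * Δ ^ 2) / σr2 ^ 2 + lam * (-(1 / σr2) + 1 / σq ^ 2) = 0 :=
  kkt_variance_stationarity_general μp μq σp σq τ hσq hτ
end
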